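/- arXiv:math/0301238 — 2 statements merged into one kernel-verified Lean document; each statement's English description precedes it below -/
import Mathlib

section
/- Let K be a field and f0 = s u^2, f1 = t^2(s+u), f2 = s t (s+u), f3 = t u (s+u) in K[s,t,u]. Then the polynomial P(x,y,z,w) = xyz + xyw - zw^2 vanishes identically under the substitution x = f0, y = f1, z = f2, w = f3, and P is irreducible in K[x,y,z,w]. -/
/-!
The vanishing is a direct computation. For irreducibility, `P` is linear in `x`:
`P = x · y(z + w) - z w²`, so as a polynomial in `x` over `K[y, z, w]` it is irreducible as soon as
its two coefficients are relatively prime. The only prime factors of `z w²` are `z` and `w`, and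
`y (z + w)` is divisible by neither, as it does not vanish identically on `z = 0` or on `w = 0`.
-/

open MvPolynomial

theorem MvPolynomial.not_X_dvd_of_eval_ne_zero {R σ : Type*} [CommSemiring R]
    {p : MvPolynomial σ R} {i : σ} {x : σ → R} (hx : x i = 0) (hp : eval x p ≠ 0) :
    ¬ X i ∣ p := by
  rintro ⟨q, rfl⟩
  simp [hx] at hp

theorem MvPolynomial.isRelPrime_X_of_eval_ne_zero {R σ : Type*} [CommRing R] [IsDomain R]
    {p : MvPolynomial σ R} {i : σ} {x : σ → R} (hx : x i = 0) (hp : eval x p ≠ 0) :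
    IsRelPrime p (X i) :=
  (X_prime.irreducible.isRelPrime_iff_not_dvd.mpr (not_X_dvd_of_eval_ne_zero hx hp)).symm

section

variable {R : Type*} [CommRing R]

theorem finSuccEquiv_xyz_add_xyw_sub_zw_sq :
    finSuccEquiv R 3 (X 0 * X 1 * X 2 + X 0 * X 1 * X 3 - X 2 * X 3 ^ 2) =
      Polynomial.C (X 0 * (X 1 + X 2)) * Polynomial.X + Polynomial.C (-(X 1 * X 2 ^ 2)) := by
  simp only [map_sub, map_add, map_mul, map_pow, map_neg, finSuccEquiv_X_zero]
  rw [show (1 : Fin 4) = Fin.succ 0 from rfl, show (2 : Fin 4) = Fin.succ 1 from rfl,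
    show (3 : Fin 4) = Fin.succ 2 from rfl]
  simp only [finSuccEquiv_X_succ]
  ring

variable [IsDomain R] [UniqueFactorizationMonoid R]

theorem isRelPrime_X_mul_X_add_X_neg_X_mul_X_sq :
    IsRelPrime (X 0 * (X 1 + X 2) : MvPolynomial (Fin 3) R) (-(X 1 * X 2 ^ 2)) := by
  have h1 : IsRelPrime (X 0 * (X 1 + X 2) : MvPolynomial (Fin 3) R) (X 1) :=
    isRelPrime_X_of_eval_ne_zero (x := ![1, 0, 1]) rfl (by simp)
  have h2 : IsRelPrime (X 0 * (X 1 + X 2) : MvPolynomial (Fin 3) R) (X 2) :=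
    isRelPrime_X_of_eval_ne_zero (x := ![1, 1, 0]) rfl (by simp)
  exact (h1.mul_right h2.pow_right).neg_right

theorem irreducible_xyz_add_xyw_sub_zw_sq :
    Irreducible (X 0 * X 1 * X 2 + X 0 * X 1 * X 3 - X 2 * X 3 ^ 2 : MvPolynomial (Fin 4) R) := by
  refine (MulEquiv.irreducible_iff (finSuccEquiv R 3).toMulEquiv).mp ?_
  change Irreducible (finSuccEquiv R 3 _)
  rw [finSuccEquiv_xyz_add_xyw_sub_zw_sq]
  refine Polynomial.irreducible_C_mul_X_add_C ?_ isRelPrime_X_mul_X_add_X_neg_X_mul_X_sq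
  exact fun h => by simpa using congrArg (eval ![1, 1, 0]) h

end

/-- For `f0 = s u^2`, `f1 = t^2 (s+u)`, `f2 = s t (s+u)`, `f3 = t u (s+u)` in
`K[s,t,u]`, the polynomial `P = xyz + xyw - z w^2` vanishes identically under the substitution
`x = f0, y = f1, z = f2, w = f3`, and `P` is irreducible in `K[x,y,z,w]`. -/
theorem stmt_10 (K : Type*) [Field K]
    (f0 f1 f2 f3 : MvPolynomial (Fin 3) K)
    (hf0 : f0 = X 0 * X 2 ^ 2) (hf1 : f1 = X 1 ^ 2 * (X 0 + X 2))
    (hf2 : f2 = X 0 * X 1 * (X 0 + X 2)) (hf3 : f3 = X 1 * X 2 * (X 0 + X 2))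
    (P : MvPolynomial (Fin 4) K)
    (hP : P = X 0 * X 1 * X 2 + X 0 * X 1 * X 3 - X 2 * X 3 ^ 2) :
    (aeval ![f0, f1, f2, f3]) P = 0 ∧ Irreducible P := by
  subst hf0 hf1 hf2 hf3 hP
  refine ⟨?_, irreducible_xyz_add_xyw_sub_zw_sq⟩
  simp only [map_sub, map_add, map_mul, map_pow, aeval_X, Matrix.cons_val_zero,
    Matrix.cons_val_one, Matrix.cons_val]
  ring
end

section
/- Let K be a field and f0 = s u^2, f1 = t^2(s+u), f2 = s t(s+u), f3 = t u(s+u) in K[s,t,u], with ideal I = (f0,f1,f2,f3). Then the saturation of I with respect to (s,t,u) contains the polynomials t(s+u) and s u^2; in particular the initial degree of the saturated ideal is at most 2. -/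
open MvPolynomial

theorem Ideal.span_mul_span_le {R : Type*} [CommSemiring R] {S T : Set R} {I : Ideal R}
    (h : ∀ a ∈ S, ∀ b ∈ T, a * b ∈ I) : Ideal.span S * Ideal.span T ≤ I := by
  rw [Ideal.span_mul_span', Ideal.span_le]
  rintro _ ⟨a, ha, b, hb, rfl⟩
  exact h a ha b hb

/-- For `f0 = s u^2`, `f1 = t^2(s+u)`, `f2 = s t(s+u)`, `f3 = t u(s+u)` in
`K[s,t,u]` with `I = (f0,f1,f2,f3)`, the saturation of `I` with respect to the irrelevant
ideal `m = (s,t,u)` contains `t(s+u)` and `s u^2`: there is a `k` with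
`m^k · (t(s+u), s u^2) ⊆ I`.  In particular the initial degree of `I^sat` is at most 2. -/
theorem stmt_11 (K : Type*) [Field K]
    (f0 f1 f2 f3 : MvPolynomial (Fin 3) K)
    (hf0 : f0 = X 0 * X 2 ^ 2) (hf1 : f1 = X 1 ^ 2 * (X 0 + X 2))
    (hf2 : f2 = X 0 * X 1 * (X 0 + X 2)) (hf3 : f3 = X 1 * X 2 * (X 0 + X 2))
    (I : Ideal (MvPolynomial (Fin 3) K)) (hI : I = Ideal.span {f0, f1, f2, f3}) :
    ∃ k : ℕ, (Ideal.span {X 0, X 1, X 2} : Ideal (MvPolynomial (Fin 3) K)) ^ k *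
      Ideal.span {X 1 * (X 0 + X 2), X 0 * X 2 ^ 2} ≤ I := by
  subst hI
  refine ⟨1, ?_⟩
  rw [pow_one]
  refine Ideal.span_mul_span_le fun a ha b hb => ?_
  simp only [Set.mem_insert_iff, Set.mem_singleton_iff] at ha hb
  obtain rfl | rfl := hb
  · obtain rfl | rfl | rfl := ha
    · rw [show X 0 * (X 1 * (X 0 + X 2)) = f2 by rw [hf2]; ring]
      exact Ideal.subset_span (by simp)
    · rw [show X 1 * (X 1 * (X 0 + X 2)) = f1 by rw [hf1]; ring]
      exact Ideal.subset_span (by simp)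
    · rw [show X 2 * (X 1 * (X 0 + X 2)) = f3 by rw [hf3]; ring]
      exact Ideal.subset_span (by simp)
  · exact Ideal.mul_mem_left _ _ (Ideal.subset_span (by simp [hf0]))
end
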